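/- arXiv:1810.07141 — 4 statements merged into one kernel-verified Lean document; each statement's English description precedes it below -/
import Mathlib

section
/- Let n ≥ 2, β ≥ n+1, and 2 ≤ p ≤ p_{β,n} where p_{β,n} = 2(1 + ((β−1)(β−n−1) + ((β−1)(β−2)(β−n)(β−n−1))^{1/2})/(n−1)). Then for all real numbers λ_1, …, λ_n and all a_1, …, a_n ≥ 0 with Σ a_i = 1, one has (β−1)Σ λ_i^2 − (Σ λ_i)^2 + (p−2)((β−1)Σ λ_i^2 a_i − (Σ λ_i)(Σ λ_i a_i)) ≥ 0. -/
/-- Discriminant inequality derived from the bound `p ≤ p_{β,n}`. -/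
lemma disc_ineq (nn β c : ℝ) (hn : 2 ≤ nn) (hβ : nn + 1 ≤ β) (hc : 0 ≤ c)
    (hcu : c * (nn - 1) ≤ 2 * ((β - 1) * (β - nn - 1) +
      Real.sqrt ((β - 1) * (β - 2) * (β - nn) * (β - nn - 1)))) :
    (2 + c) ^ 2 * (nn - 1) ≤ 4 * (β - 2) * (β - nn) * (1 + c) := by
  set u := (β - 1) * (β - nn - 1) with hu'
  have hu : 0 ≤ u := mul_nonneg (by linarith) (by linarith)
  have harg : (β - 1) * (β - 2) * (β - nn) * (β - nn - 1) = u * (u + (nn - 1)) := by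
    rw [hu']; ring
  set S := Real.sqrt ((β - 1) * (β - 2) * (β - nn) * (β - nn - 1)) with hS'
  have hS0 : 0 ≤ S := Real.sqrt_nonneg _
  have hS2 : S ^ 2 = u * (u + (nn - 1)) := by
    rw [hS', Real.sq_sqrt (by rw [harg]; exact mul_nonneg hu (by linarith)), harg]
  have hSu : u ≤ S := by nlinarith [hS2, hu, hS0]
  have hK : (β - 2) * (β - nn) = u + (nn - 1) := by rw [hu']; ring
  have hfac : 0 ≤ (2 * (u + S) - c * (nn - 1)) * (c * (nn - 1) - 2 * (u - S)) := by
    apply mul_nonneg (by linarith)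
    nlinarith [mul_nonneg hc (show (0:ℝ) ≤ nn - 1 by linarith)]
  nlinarith [hfac, hS2, hK, show (0:ℝ) < nn - 1 by linarith]

lemma quad_nonneg (nn β c x t q : ℝ) (hn : 2 ≤ nn) (hβ : nn + 1 ≤ β) (hc : 0 ≤ c)
    (hq : t ^ 2 ≤ (nn - 1) * (q - x ^ 2))
    (hdisc : (2 + c) ^ 2 * (nn - 1) ≤ 4 * (β - 2) * (β - nn) * (1 + c)) :
    0 ≤ (β - 1) * q - (x + t) ^ 2 + c * ((β - 1) * x ^ 2 - (x + t) * x) := by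
  have hA : 0 < (β - 2) * (1 + c) := by nlinarith
  have hn1 : (0:ℝ) < nn - 1 := by linarith
  have key : 0 ≤ 4 * ((β - 2) * (1 + c)) * (nn - 1) ^ 2 *
      ((β - 1) * q - (x + t) ^ 2 + c * ((β - 1) * x ^ 2 - (x + t) * x)) := by
    have e : 4 * ((β - 2) * (1 + c)) * (nn - 1) ^ 2 *
        ((β - 1) * q - (x + t) ^ 2 + c * ((β - 1) * x ^ 2 - (x + t) * x))
      = (nn - 1) ^ 2 * (2 * (β - 2) * (1 + c) * x - (2 + c) * t) ^ 2
        + (nn - 1) * ((4 * (β - 2) * (β - nn) * (1 + c) - (2 + c) ^ 2 * (nn - 1)) * t ^ 2)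
        + 4 * ((β - 2) * (1 + c)) * (nn - 1) * (β - 1) * ((nn - 1) * (q - x ^ 2) - t ^ 2) := by
      ring
    rw [e]
    have t1 : 0 ≤ (nn - 1) ^ 2 * (2 * (β - 2) * (1 + c) * x - (2 + c) * t) ^ 2 :=
      mul_nonneg (sq_nonneg _) (sq_nonneg _)
    have t2 : 0 ≤ (nn - 1) * ((4 * (β - 2) * (β - nn) * (1 + c) - (2 + c) ^ 2 * (nn - 1)) * t ^ 2) :=
      mul_nonneg hn1.le (mul_nonneg (by linarith) (sq_nonneg t))
    have t3 : 0 ≤ 4 * ((β - 2) * (1 + c)) * (nn - 1) * (β - 1) * ((nn - 1) * (q - x ^ 2) - t ^ 2) := by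
      apply mul_nonneg _ (by linarith)
      apply mul_nonneg _ (by linarith)
      nlinarith
    linarith
  nlinarith [key, mul_pos (mul_pos (by linarith : (0:ℝ) < 4) hA) (pow_pos hn1 2)]

theorem eigenvalue_inequality_claim {n : ℕ} (hn : 2 ≤ n) (β p : ℝ)
    (hβ : (n : ℝ) + 1 ≤ β) (hp2 : 2 ≤ p)
    (hp : p ≤ 2 * (1 + ((β - 1) * (β - n - 1) +
        Real.sqrt ((β - 1) * (β - 2) * (β - n) * (β - n - 1))) / (n - 1)))
    (lam a : Fin n → ℝ) (ha : ∀ i, 0 ≤ a i) (hsum : ∑ i, a i = 1) :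
    0 ≤ (β - 1) * ∑ i, (lam i) ^ 2 - (∑ i, lam i) ^ 2 +
        (p - 2) * ((β - 1) * ∑ i, (lam i) ^ 2 * a i -
          (∑ i, lam i) * ∑ i, lam i * a i) := by
  have hn' : (2:ℝ) ≤ (n:ℝ) := by exact_mod_cast hn
  have hn1 : (0:ℝ) < (n:ℝ) - 1 := by linarith
  have hc : 0 ≤ p - 2 := by linarith
  -- derive the multiplied form of hp
  have hcu : (p - 2) * ((n:ℝ) - 1) ≤ 2 * ((β - 1) * (β - n - 1) +
      Real.sqrt ((β - 1) * (β - 2) * (β - n) * (β - n - 1))) := by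
    set X := (β - 1) * (β - n - 1) +
      Real.sqrt ((β - 1) * (β - 2) * (β - n) * (β - n - 1)) with hX
    have h1 : p - 2 ≤ 2 * (X / ((n:ℝ) - 1)) := by linarith
    have h2 := mul_le_mul_of_nonneg_right h1 hn1.le
    have h3 : 2 * (X / ((n:ℝ) - 1)) * ((n:ℝ) - 1) = 2 * X := by field_simp
    linarith
  have hdisc : (2 + (p - 2)) ^ 2 * ((n:ℝ) - 1) ≤ 4 * (β - 2) * (β - (n:ℝ)) * (1 + (p - 2)) :=
    disc_ineq (n:ℝ) β (p - 2) hn' hβ hc hcu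
  have key : ∀ j, 0 ≤ (β - 1) * (∑ i, (lam i) ^ 2) - (∑ i, lam i) ^ 2 +
      (p - 2) * ((β - 1) * (lam j) ^ 2 - (∑ i, lam i) * lam j) := by
    intro j
    have ht : ∑ i, lam i = lam j + ∑ i ∈ Finset.univ.erase j, lam i :=
      (Finset.add_sum_erase _ _ (Finset.mem_univ j)).symm
    have htq : ∑ i, (lam i) ^ 2 = (lam j) ^ 2 + ∑ i ∈ Finset.univ.erase j, (lam i) ^ 2 :=
      (Finset.add_sum_erase _ (fun i => (lam i) ^ 2) (Finset.mem_univ j)).symm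
    have hcard : ((Finset.univ.erase j).card : ℝ) = (n:ℝ) - 1 := by
      rw [Finset.card_erase_of_mem (Finset.mem_univ j)]
      simp [Finset.card_univ]
      push_cast [Nat.cast_sub (by omega : 1 ≤ n)]
      ring
    have hcs := sq_sum_le_card_mul_sum_sq (s := Finset.univ.erase j) (f := lam)
    have hq : (∑ i ∈ Finset.univ.erase j, lam i) ^ 2 ≤
        ((n:ℝ) - 1) * ((∑ i, (lam i) ^ 2) - (lam j) ^ 2) := by
      rw [htq]
      calc (∑ i ∈ Finset.univ.erase j, lam i) ^ 2
          ≤ ((Finset.univ.erase j).card : ℝ) * ∑ i ∈ Finset.univ.erase j, (lam i) ^ 2 := by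
            exact_mod_cast hcs
        _ = ((n:ℝ) - 1) * ((lam j) ^ 2 + (∑ i ∈ Finset.univ.erase j, (lam i) ^ 2) - (lam j) ^ 2) := by
            rw [hcard]; ring
    have := quad_nonneg ((n:ℝ)) β (p - 2) (lam j) (∑ i ∈ Finset.univ.erase j, lam i)
      (∑ i, (lam i) ^ 2) hn' hβ hc hq hdisc
    rw [ht]
    linarith
  have hexp : (β - 1) * ∑ i, (lam i) ^ 2 - (∑ i, lam i) ^ 2 +
        (p - 2) * ((β - 1) * ∑ i, (lam i) ^ 2 * a i -
          (∑ i, lam i) * ∑ i, lam i * a i)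
      = ∑ j, a j * ((β - 1) * (∑ i, (lam i) ^ 2) - (∑ i, lam i) ^ 2 +
          (p - 2) * ((β - 1) * (lam j) ^ 2 - (∑ i, lam i) * lam j)) := by
    have h1 : ∑ j, a j * ((β - 1) * (∑ i, (lam i) ^ 2) - (∑ i, lam i) ^ 2 +
          (p - 2) * ((β - 1) * (lam j) ^ 2 - (∑ i, lam i) * lam j))
        = (∑ j, a j) * ((β - 1) * (∑ i, (lam i) ^ 2) - (∑ i, lam i) ^ 2)
          + (p - 2) * (β - 1) * (∑ j, (lam j) ^ 2 * a j)
          - (p - 2) * (∑ i, lam i) * (∑ j, lam j * a j) := by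
      calc ∑ j, a j * ((β - 1) * (∑ i, (lam i) ^ 2) - (∑ i, lam i) ^ 2 +
              (p - 2) * ((β - 1) * (lam j) ^ 2 - (∑ i, lam i) * lam j))
          = ∑ j, (a j * ((β - 1) * (∑ i, (lam i) ^ 2) - (∑ i, lam i) ^ 2)
              + (p - 2) * (β - 1) * ((lam j) ^ 2 * a j)
              - (p - 2) * (∑ i, lam i) * (lam j * a j)) :=
            Finset.sum_congr rfl fun j _ => by ring
        _ = _ := by
            rw [Finset.sum_sub_distrib, Finset.sum_add_distrib, ← Finset.sum_mul,
              ← Finset.mul_sum, ← Finset.mul_sum]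
    rw [h1, hsum]; ring
  rw [hexp]
  exact Finset.sum_nonneg fun j _ => mul_nonneg (ha j) (key j)
end

section
/- Let A be a positive definite symmetric n×n real matrix, v ∈ ℝ^n, and p ≥ 2. Then |A^{1/p} v|^p ≤ |v|^{p−2} |A^{1/2} v|^2. -/
open Matrix

/-- The `r`-th power of a Hermitian matrix, via the spectral decomposition. -/
noncomputable def matRpow {n : ℕ} {A : Matrix (Fin n) (Fin n) ℝ}
    (hA : A.IsHermitian) (r : ℝ) : Matrix (Fin n) (Fin n) ℝ :=
  (hA.eigenvectorUnitary : Matrix (Fin n) (Fin n) ℝ) *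
    Matrix.diagonal (fun i => (hA.eigenvalues i) ^ r) *
      (star hA.eigenvectorUnitary : Matrix (Fin n) (Fin n) ℝ)

/-!
Diagonalise `A = U D Uᵀ` and put `μᵢ = ((Uᵀ v)ᵢ)²`. Since `U` is orthogonal,
`|v|² = ∑ μᵢ` and `|A^r v|² = ∑ μᵢ λᵢ^(2r)`, so the claim is the weighted Hölder
(power-mean) inequality `(∑ μᵢ λᵢ^(1/q))^q ≤ (∑ μᵢ)^(q-1) ∑ μᵢ λᵢ` for `q = p/2 ≥ 1`.
-/

namespace Real

theorem rpow_sum_weight_mul_le {ι : Type*} (s : Finset ι) {q : ℝ} (hq : 1 ≤ q) (w f : ι → ℝ)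
    (hw : ∀ i, 0 ≤ w i) (hf : ∀ i, 0 ≤ f i) :
    (∑ i ∈ s, w i * f i) ^ q ≤ (∑ i ∈ s, w i) ^ (q - 1) * ∑ i ∈ s, w i * f i ^ q := by
  have hq0 : 0 < q := by linarith
  have hW : 0 ≤ ∑ i ∈ s, w i := s.sum_nonneg fun i _ => hw i
  have hWf : 0 ≤ ∑ i ∈ s, w i * f i ^ q :=
    s.sum_nonneg fun i _ => mul_nonneg (hw i) (rpow_nonneg (hf i) q)
  calc (∑ i ∈ s, w i * f i) ^ q
      ≤ ((∑ i ∈ s, w i) ^ (1 - q⁻¹) * (∑ i ∈ s, w i * f i ^ q) ^ q⁻¹) ^ q := by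
        gcongr
        · exact s.sum_nonneg fun i _ => mul_nonneg (hw i) (hf i)
        · exact inner_le_weight_mul_Lp_of_nonneg s hq w f hw hf
    _ = (∑ i ∈ s, w i) ^ (q - 1) * ∑ i ∈ s, w i * f i ^ q := by
        rw [mul_rpow (rpow_nonneg hW _) (rpow_nonneg hWf _), ← rpow_mul hW, ← rpow_mul hWf,
          inv_mul_cancel₀ hq0.ne', rpow_one, sub_mul, one_mul, inv_mul_cancel₀ hq0.ne']

theorem sqrt_rpow {x : ℝ} (hx : 0 ≤ x) (y : ℝ) : √x ^ y = x ^ (y / 2) := by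
  rw [sqrt_eq_rpow, ← rpow_mul hx, one_div_mul_eq_div]

end Real

theorem Matrix.sum_sq_mulVec_of_transpose_mul_self {R m n : Type*} [CommSemiring R]
    [Fintype m] [Fintype n] [DecidableEq n] {U : Matrix m n R} (hU : Uᵀ * U = 1) (x : n → R) :
    ∑ i, (U *ᵥ x) i ^ 2 = ∑ i, x i ^ 2 := by
  simp only [sq]
  change (U *ᵥ x) ⬝ᵥ (U *ᵥ x) = x ⬝ᵥ x
  rw [dotProduct_mulVec, ← vecMul_transpose, vecMul_vecMul, hU, vecMul_one]

theorem Matrix.sum_sq_mulVec_of_mem_unitaryGroup {n : Type*} [Fintype n] [DecidableEq n]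
    {U : Matrix n n ℝ} (hU : U ∈ unitaryGroup n ℝ) (x : n → ℝ) :
    ∑ i, (U *ᵥ x) i ^ 2 = ∑ i, x i ^ 2 :=
  sum_sq_mulVec_of_transpose_mul_self
    (by simpa [star_eq_conjTranspose] using mem_unitaryGroup_iff'.mp hU) x

theorem sum_sq_matRpow_mulVec {n : ℕ} {A : Matrix (Fin n) (Fin n) ℝ} (hA : A.IsHermitian)
    (hpos : A.PosSemidef) (r : ℝ) (v : Fin n → ℝ) :
    ∑ i, (matRpow hA r *ᵥ v) i ^ 2 =
      ∑ i, ((star hA.eigenvectorUnitary : Matrix (Fin n) (Fin n) ℝ) *ᵥ v) i ^ 2 *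
        hA.eigenvalues i ^ (2 * r) := by
  rw [matRpow, ← mulVec_mulVec, ← mulVec_mulVec,
    sum_sq_mulVec_of_mem_unitaryGroup hA.eigenvectorUnitary.2]
  refine Finset.sum_congr rfl fun i _ => ?_
  rw [mulVec_diagonal, mul_pow, mul_comm, mul_comm 2 r, Real.rpow_mul (hpos.eigenvalues_nonneg i)]
  norm_cast

theorem matrix_root_norm_ineq {n : ℕ} {A : Matrix (Fin n) (Fin n) ℝ}
    (hA : A.IsHermitian) (hpos : A.PosDef) (v : Fin n → ℝ) (p : ℝ) (hp : 2 ≤ p) :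
    Real.sqrt (∑ i, ((matRpow hA (1 / p)).mulVec v i) ^ 2) ^ p ≤
      Real.sqrt (∑ i, (v i) ^ 2) ^ (p - 2) *
        Real.sqrt (∑ i, ((matRpow hA (1 / 2)).mulVec v i) ^ 2) ^ 2 := by
  set μ := fun i => ((star hA.eigenvectorUnitary : Matrix (Fin n) (Fin n) ℝ) *ᵥ v) i ^ 2
  set lam := hA.eigenvalues
  have hμ (i) : 0 ≤ μ i := sq_nonneg _
  have hlam (i) : 0 ≤ lam i := hpos.posSemidef.eigenvalues_nonneg i
  have hp0 : p ≠ 0 := by positivity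
  have key := Real.rpow_sum_weight_mul_le Finset.univ (q := p / 2) (by linarith) μ
    (fun i => lam i ^ (2 * (1 / p))) hμ (fun i => Real.rpow_nonneg (hlam i) _)
  have hexp : 2 * (1 / p) * (p / 2) = 1 := by field_simp
  simp only [← Real.rpow_mul (hlam _), hexp, Real.rpow_one] at key
  rw [Real.sqrt_rpow (by positivity), Real.sqrt_rpow (by positivity), Real.sq_sqrt (by positivity),
    sum_sq_matRpow_mulVec hA hpos.posSemidef, sum_sq_matRpow_mulVec hA hpos.posSemidef,
    ← sum_sq_mulVec_of_mem_unitaryGroup (Unitary.star_mem hA.eigenvectorUnitary.2) v,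
    sub_div, div_self two_ne_zero,
    mul_one_div_cancel two_ne_zero]
  simpa only [Real.rpow_one] using key
end

section
/- Let n ≥ 1 and β > n+1, and set K_β = (1/8)·((4β−5)^2 + n−1)/((β−1)(β−n−1)). The function Φ_p(t) = t^{2/p} on (0,∞), for 1 < p < 2, satisfies Φ_p^{(4)}(t) Φ_p″(t) ≥ K_β (Φ_p^{(3)}(t))^2 for all t > 0 if and only if 1 < p ≤ p_β := 1 + 4(β−1)(β−n−1)/(4(β−1)^2 + 4(3n−2)(β−1) + n). -/
/-! With `a = 2 / p ∈ (1, 2)`, both sides are constant multiples of `t ^ (2a - 6)`, and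

  `Φ⁽⁴⁾ Φ″ - K (Φ‴)² = (a (a - 1))² (2 - a) ((3 - a) - K (2 - a)) t ^ (2a - 6)`,

so admissibility is the linear condition `K (2 - a) ≤ 3 - a`, i.e. `p ≤ 1 + 1 / (2K - 3)`.
For `K = K_β` one has `2 K_β - 3 = (4(β-1)² + 4(3n-2)(β-1) + n) / (4 (β-1)(β-n-1)) > 0`,
which turns this threshold into `p_β`. -/

lemma rpow_sq_eq_mul_rpow {t x y z : ℝ} (ht : 0 < t) (h : y + z = 2 * x) :
    (t ^ x) ^ 2 = t ^ y * t ^ z := by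
  rw [← Real.rpow_add ht, h, mul_comm, Real.rpow_mul ht.le, Real.rpow_two]

lemma forall_pos_mul_mul_rpow_sq_le_iff {K c d e x y z : ℝ} (h : y + z = 2 * x) :
    (∀ t : ℝ, 0 < t → K * (c * t ^ x) ^ 2 ≤ d * t ^ y * (e * t ^ z)) ↔ K * c ^ 2 ≤ d * e := by
  refine ⟨fun hall => by simpa using hall 1 one_pos, fun hle t ht => ?_⟩
  have hpow : 0 ≤ t ^ y * t ^ z := by positivity
  calc K * (c * t ^ x) ^ 2 = K * c ^ 2 * (t ^ y * t ^ z) := by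
        rw [mul_pow, rpow_sq_eq_mul_rpow ht h]; ring
    _ ≤ d * e * (t ^ y * t ^ z) := mul_le_mul_of_nonneg_right hle hpow
    _ = d * t ^ y * (e * t ^ z) := by ring

lemma mul_sq_le_iff_mul_two_sub_le {K a : ℝ} (ha0 : a ≠ 0) (ha1 : a ≠ 1) (ha2 : a < 2) :
    K * (a * (a - 1) * (a - 2)) ^ 2 ≤ a * (a - 1) * (a - 2) * (a - 3) * (a * (a - 1)) ↔
      K * (2 - a) ≤ 3 - a := by
  have hne : a * (a - 1) ≠ 0 := mul_ne_zero ha0 (sub_ne_zero.mpr ha1)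
  have hpos : 0 < (a * (a - 1)) ^ 2 * (2 - a) := mul_pos (by positivity) (by linarith)
  have hfactor : a * (a - 1) * (a - 2) * (a - 3) * (a * (a - 1)) - K * (a * (a - 1) * (a - 2)) ^ 2
      = (a * (a - 1)) ^ 2 * (2 - a) * ((3 - a) - K * (2 - a)) := by ring
  rw [← sub_nonneg, hfactor, mul_nonneg_iff_of_pos_left hpos, sub_nonneg]

lemma mul_two_sub_two_div_le_iff {K p : ℝ} (hp : 0 < p) (hK : 0 < 2 * K - 3) :
    K * (2 - 2 / p) ≤ 3 - 2 / p ↔ p ≤ 1 + 1 / (2 * K - 3) := by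
  rw [← mul_le_mul_iff_of_pos_left hp, add_div' _ _ _ hK.ne', le_div_iff₀ hK]
  field_simp
  constructor <;> intro h <;> linarith

lemma two_mul_K_sub_three {n β : ℝ} (hβ1 : β ≠ 1) (hβn : β ≠ n + 1) :
    2 * ((1 / 8) * ((4 * β - 5) ^ 2 + n - 1) / ((β - 1) * (β - n - 1))) - 3 =
      (4 * (β - 1) ^ 2 + 4 * (3 * n - 2) * (β - 1) + n) / (4 * (β - 1) * (β - n - 1)) := by
  have h1 : β - 1 ≠ 0 := sub_ne_zero.mpr hβ1
  have h2 : β - n - 1 ≠ 0 := by rwa [sub_sub, sub_ne_zero]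
  field_simp
  ring

theorem phi_p_admissible_iff (n : ℕ) (hn : 1 ≤ n) (β : ℝ) (hβ : (n : ℝ) + 1 < β)
    (p : ℝ) (hp1 : 1 < p) (hp2 : p < 2) :
    (∀ t : ℝ, 0 < t →
      (1 / 8) * ((4 * β - 5) ^ 2 + n - 1) / ((β - 1) * (β - n - 1)) *
          ((2 / p) * (2 / p - 1) * (2 / p - 2) * t ^ (2 / p - 3)) ^ 2 ≤
        ((2 / p) * (2 / p - 1) * (2 / p - 2) * (2 / p - 3) * t ^ (2 / p - 4)) *
          ((2 / p) * (2 / p - 1) * t ^ (2 / p - 2))) ↔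
      p ≤ 1 + 4 * (β - 1) * (β - n - 1) /
          (4 * (β - 1) ^ 2 + 4 * (3 * n - 2) * (β - 1) + n) := by
  have hp0 : 0 < p := by linarith
  have hn1 : (1 : ℝ) ≤ n := by exact_mod_cast hn
  have hβ1 : 0 < β - 1 := by linarith
  have hβn : 0 < β - n - 1 := by linarith
  have ha0 : 2 / p ≠ 0 := by positivity
  have ha1 : 2 / p ≠ 1 := by rw [ne_eq, div_eq_one_iff_eq hp0.ne']; linarith
  have ha2 : 2 / p < 2 := by rw [div_lt_iff₀ hp0]; linarith
  have hK := two_mul_K_sub_three (n := n) (ne_of_gt (by linarith : 1 < β)) (by linarith : β ≠ n + 1)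
  have hD : 0 < 4 * (β - 1) ^ 2 + 4 * (3 * n - 2) * (β - 1) + n := by nlinarith
  rw [forall_pos_mul_mul_rpow_sq_le_iff (by ring), mul_sq_le_iff_mul_two_sub_le ha0 ha1 ha2,
    mul_two_sub_two_div_le_iff hp0 (hK ▸ by positivity), hK, one_div_div]
end

section
/- Let Φ: I → ℝ be C^4 on an open interval I with Φ″ ≥ 0 and Φ″Φ^{(4)} ≥ 2(Φ^{(3)})^2, and let Ψ_p(t) = (t−a+1)^p with 1 < p < 2 on a bounded interval I_0 = (a,b) with closure contained in I. Set M = sup_{I_0}|Φ^{(3)}|, N = inf_{I_0}|Ψ_p^{(3)}| > 0, γ_p = (3−p)/(2−p). Then for every ε > 0, the function Φ_ε = Φ + εΨ_p satisfies Φ_ε″ Φ_ε^{(4)} ≥ δ (Φ_ε^{(3)})^2 on I_0 for every δ with 2 < δ < min{ (2γ_p)^{1/2}, (2M^2 + γ_p ε^2 N^2)/(M^2 + ε^2 N^2) }. -/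
/-!
At a point `t`, write `Aₖ = Φ⁽ᵏ⁾(t)` and `Bₖ = Ψ_p⁽ᵏ⁾(t)`. The power `Ψ_p` satisfies
`B₂B₄ = γ_p B₃²` with `B₂, B₄ ≥ 0`, and `A₄ ≥ 0` as well: where `A₂ = 0`, `t` is a minimum of `Φ″`.
In `(A₂ + εB₂)(A₄ + εB₄)` the cross terms are at least `2ε√(2γ_p)|A₃B₃| ≥ 2δε|A₃B₃|` by AM–GM,
so it remains to compare the square terms, `(δ - 2)A₃² ≤ (γ_p - δ)ε²B₃²`. Since `δ < γ_p`, this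
follows from `|A₃| ≤ M`, `|B₃| ≥ N` and the bound `δ < (2M² + γ_p ε²N²)/(M² + ε²N²)`.
-/

open Filter Topology Set

lemma sq_add_le_mul_of_admissible {κ μ δ x₂ x₃ x₄ y₂ y₃ y₄ : ℝ} (hμ : 0 ≤ μ)
    (hx₂ : 0 ≤ x₂) (hx₄ : 0 ≤ x₄) (hy₂ : 0 ≤ y₂) (hy₄ : 0 ≤ y₄)
    (hx : κ * x₃ ^ 2 ≤ x₂ * x₄) (hy : μ * y₃ ^ 2 ≤ y₂ * y₄)
    (hδ₀ : 0 ≤ δ) (hδ : δ ^ 2 ≤ κ * μ) (hmix : (δ - κ) * x₃ ^ 2 ≤ (μ - δ) * y₃ ^ 2) :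
    δ * (x₃ + y₃) ^ 2 ≤ (x₂ + y₂) * (x₄ + y₄) := by
  have hcross : 2 * δ * |x₃ * y₃| ≤ x₂ * y₄ + y₂ * x₄ := by
    refine (pow_le_pow_iff_left₀ (by positivity) (by positivity) two_ne_zero).mp ?_
    calc (2 * δ * |x₃ * y₃|) ^ 2 = 4 * δ ^ 2 * (x₃ ^ 2 * y₃ ^ 2) := by
          rw [mul_pow, sq_abs]; ring
      _ ≤ 4 * ((κ * x₃ ^ 2) * (μ * y₃ ^ 2)) := by nlinarith [sq_nonneg (x₃ * y₃)]
      _ ≤ 4 * ((x₂ * x₄) * (y₂ * y₄)) := by gcongr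
      _ ≤ (x₂ * y₄ + y₂ * x₄) ^ 2 := by nlinarith [sq_nonneg (x₂ * y₄ - y₂ * x₄)]
  have hprod : δ * (x₃ * y₃) ≤ δ * |x₃ * y₃| := mul_le_mul_of_nonneg_left (le_abs_self _) hδ₀
  nlinarith

lemma sq_add_le_mul_of_bounds {γ δ ε M N A₂ A₃ A₄ B₂ B₃ B₄ : ℝ} (hε : 0 < ε) (hN : 0 < N)
    (hA₂ : 0 ≤ A₂) (hA₄ : 0 ≤ A₄) (hB₂ : 0 ≤ B₂) (hB₄ : 0 ≤ B₄)
    (hA : 2 * A₃ ^ 2 ≤ A₂ * A₄) (hB : γ * B₃ ^ 2 ≤ B₂ * B₄) (hA₃ : |A₃| ≤ M) (hB₃ : N ≤ |B₃|)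
    (hδ₂ : 2 < δ)
    (hδ : δ < min (√(2 * γ)) ((2 * M ^ 2 + γ * ε ^ 2 * N ^ 2) / (M ^ 2 + ε ^ 2 * N ^ 2))) :
    δ * (A₃ + ε * B₃) ^ 2 ≤ (A₂ + ε * B₂) * (A₄ + ε * B₄) := by
  obtain ⟨hδγ, hδMN⟩ := lt_min_iff.mp hδ
  have hδsq : δ ^ 2 < 2 * γ := (Real.lt_sqrt (by linarith)).mp hδγ
  have hMN : δ * (M ^ 2 + ε ^ 2 * N ^ 2) < 2 * M ^ 2 + γ * ε ^ 2 * N ^ 2 :=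
    (lt_div_iff₀ (by positivity)).mp hδMN
  have hA₃M : A₃ ^ 2 ≤ M ^ 2 := sq_le_sq' (abs_le.mp hA₃).1 (abs_le.mp hA₃).2
  have hB₃N : N ^ 2 ≤ B₃ ^ 2 := by simpa only [sq_abs] using pow_le_pow_left₀ hN.le hB₃ 2
  refine sq_add_le_mul_of_admissible (κ := 2) (μ := γ) (by nlinarith) hA₂ hA₄
    (by positivity) (by positivity) hA ?_ (by linarith) (by linarith) ?_
  · nlinarith
  · have hδγ' : δ < γ := by nlinarith
    calc (δ - 2) * A₃ ^ 2 ≤ (δ - 2) * M ^ 2 := by gcongr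
      _ ≤ (γ - δ) * (ε ^ 2 * N ^ 2) := by linarith
      _ ≤ (γ - δ) * (ε * B₃) ^ 2 := by rw [mul_pow]; gcongr

lemma IsLocalMin.deriv_deriv_nonneg {f : ℝ → ℝ} {x₀ : ℝ} (hmin : IsLocalMin f x₀)
    (hc : ContinuousAt f x₀) : 0 ≤ deriv (deriv f) x₀ := by
  by_contra! hneg
  have hmax : IsLocalMax f x₀ := isLocalMax_of_deriv_deriv_neg hneg hmin.deriv_eq_zero hc
  have hconst : f =ᶠ[𝓝 x₀] fun _ ↦ f x₀ := by
    filter_upwards [hmin, hmax] with y hy₁ hy₂ using le_antisymm hy₂ hy₁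
  exact hneg.ne (by simp [hconst.deriv.deriv_eq])

lemma deriv_deriv_nonneg_of_mul_nonneg {f : ℝ → ℝ} {x₀ : ℝ} (hf : ∀ᶠ x in 𝓝 x₀, 0 ≤ f x)
    (hc : ContinuousAt f x₀) (h : 0 ≤ f x₀ * deriv (deriv f) x₀) : 0 ≤ deriv (deriv f) x₀ := by
  rcases hf.self_of_nhds.eq_or_lt with hzero | hpos
  · refine IsLocalMin.deriv_deriv_nonneg ?_ hc
    filter_upwards [hf] with x hx
    rwa [← hzero]
  · exact nonneg_of_mul_nonneg_right h hpos

lemma iteratedDeriv_rpow_add_const (p c : ℝ) (k : ℕ) :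
    iteratedDeriv k (fun t ↦ (t + c) ^ p) =
      fun t ↦ (descPochhammer ℝ k).eval p * (t + c) ^ (p - k) := by
  rw [iteratedDeriv_comp_add_const k (fun x ↦ x ^ p), iteratedDeriv_eq_iterate]
  simp only [Real.iter_deriv_rpow_const]

lemma iteratedDeriv_rpow_add_const_admissible {p c t : ℝ} (hp₁ : 1 < p) (hp₂ : p < 2)
    (ht : 0 < t + c) :
    0 ≤ iteratedDeriv 2 (fun s ↦ (s + c) ^ p) t ∧ 0 ≤ iteratedDeriv 4 (fun s ↦ (s + c) ^ p) t ∧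
      (3 - p) / (2 - p) * iteratedDeriv 3 (fun s ↦ (s + c) ^ p) t ^ 2 =
        iteratedDeriv 2 (fun s ↦ (s + c) ^ p) t * iteratedDeriv 4 (fun s ↦ (s + c) ^ p) t := by
  simp only [iteratedDeriv_rpow_add_const, descPochhammer_succ_right, descPochhammer_zero,
    CharP.cast_eq_zero, sub_zero, one_mul, Nat.cast_one, Nat.cast_ofNat, Polynomial.eval_mul,
    Polynomial.eval_X, Polynomial.eval_sub, Polynomial.eval_one, Polynomial.eval_ofNat]
  have hpow : (t + c) ^ (p - 2) * (t + c) ^ (p - 4) = ((t + c) ^ (p - 3)) ^ 2 := by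
    rw [sq, ← Real.rpow_add ht, ← Real.rpow_add ht]
    ring_nf
  have hp : 0 ≤ p * (p - 1) := by nlinarith
  have hp' : 0 ≤ (p - 2) * (p - 3) := by nlinarith
  refine ⟨mul_nonneg hp (Real.rpow_nonneg ht.le _), ?_, ?_⟩
  · linarith [mul_nonneg (mul_nonneg hp hp') (Real.rpow_nonneg ht.le (p - 4))]
  · rw [div_mul_eq_mul_div, div_eq_iff (by linarith)]
    linear_combination (-(p * (p - 1)) ^ 2 * (p - 2) ^ 2 * (3 - p)) * hpow

lemma ContDiffOn.continuousOn_iteratedDeriv_of_isOpen {f : ℝ → ℝ} {s : Set ℝ} {n : WithTop ℕ∞}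
    {m : ℕ} (hf : ContDiffOn ℝ n f s) (hmn : m ≤ n) (hs : IsOpen s) :
    ContinuousOn (iteratedDeriv m f) s :=
  (hf.continuousOn_iteratedDerivWithin hmn hs.uniqueDiffOn).congr
    (iteratedDerivWithin_of_isOpen hs).symm

theorem perturbed_admissibility_general
    (I : Set ℝ) (hIopen : IsOpen I)
    (Φ : ℝ → ℝ) (hC4 : ContDiffOn ℝ 4 Φ I)
    (hconv : ∀ t ∈ I, 0 ≤ iteratedDeriv 2 Φ t)
    (hadm : ∀ t ∈ I, 2 * (iteratedDeriv 3 Φ t) ^ 2 ≤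
      iteratedDeriv 2 Φ t * iteratedDeriv 4 Φ t)
    (a b : ℝ) (hsub : Set.Icc a b ⊆ I)
    (p : ℝ) (hp1 : 1 < p) (hp2 : p < 2)
    (Ψ : ℝ → ℝ) (hΨ : Ψ = fun t => (t - a + 1) ^ p)
    (M N γ : ℝ)
    (hM : M = sSup ((fun t => |iteratedDeriv 3 Φ t|) '' Set.Ioo a b))
    (hNdef : N = sInf ((fun t => |iteratedDeriv 3 Ψ t|) '' Set.Ioo a b))
    (hN : 0 < N) (hγ : γ = (3 - p) / (2 - p)) :
    ∀ ε > (0 : ℝ), ∀ δ : ℝ, 2 < δ →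
      δ < min (Real.sqrt (2 * γ))
        ((2 * M ^ 2 + γ * ε ^ 2 * N ^ 2) / (M ^ 2 + ε ^ 2 * N ^ 2)) →
      ∀ t ∈ Set.Ioo a b,
        δ * (iteratedDeriv 3 (fun s => Φ s + ε * Ψ s) t) ^ 2 ≤
          iteratedDeriv 2 (fun s => Φ s + ε * Ψ s) t *
            iteratedDeriv 4 (fun s => Φ s + ε * Ψ s) t := by
  intro ε hε δ hδ₂ hδ t ht
  have htI : t ∈ I := hsub (Ioo_subset_Icc_self ht)
  have hIt : I ∈ 𝓝 t := hIopen.mem_nhds htI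
  have hΨ' : Ψ = fun s ↦ (s + (1 - a)) ^ p := by rw [hΨ]; ext s; ring_nf
  have hpos : 0 < t + (1 - a) := by linarith [ht.1]
  have hΦt : ContDiffAt ℝ 4 Φ t := hC4.contDiffAt hIt
  have hΨt : ContDiffAt ℝ 4 Ψ t :=
    hΨ' ▸ (contDiffAt_id.add contDiffAt_const).rpow_const_of_ne hpos.ne'
  have hsum (n : ℕ) (hn : n ≤ 4) : iteratedDeriv n (fun s ↦ Φ s + ε * Ψ s) t =
      iteratedDeriv n Φ t + ε * iteratedDeriv n Ψ t := by
    rw [iteratedDeriv_fun_add (hΦt.of_le (by exact_mod_cast hn))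
      (contDiffAt_const.mul (hΨt.of_le (by exact_mod_cast hn))), iteratedDeriv_const_mul_field]
  rw [hsum 2 (by norm_num), hsum 3 (by norm_num), hsum 4 (by norm_num)]
  obtain ⟨hB₂, hB₄, hB⟩ := hΨ' ▸ iteratedDeriv_rpow_add_const_admissible hp1 hp2 hpos
  have hA₄ : 0 ≤ iteratedDeriv 4 Φ t := by
    have h4 : iteratedDeriv 4 Φ = deriv (deriv (iteratedDeriv 2 Φ)) := by
      simp only [iteratedDeriv_succ]
    have hmul : 0 ≤ iteratedDeriv 2 Φ t * iteratedDeriv 4 Φ t :=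
      le_trans (by positivity) (hadm t htI)
    rw [h4] at hmul ⊢
    exact deriv_deriv_nonneg_of_mul_nonneg (eventually_of_mem hIt hconv)
      ((hC4.continuousOn_iteratedDeriv_of_isOpen (by norm_num) hIopen).continuousAt hIt) hmul
  have hA₃ : |iteratedDeriv 3 Φ t| ≤ M := by
    have hcont : ContinuousOn (iteratedDeriv 3 Φ) (Icc a b) :=
      (hC4.continuousOn_iteratedDeriv_of_isOpen (by norm_num) hIopen).mono hsub
    exact hM ▸ le_csSup ((isCompact_Icc.image_of_continuousOn hcont.abs).bddAbove.mono
      (image_mono Ioo_subset_Icc_self)) (mem_image_of_mem _ ht)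
  have hB₃ : N ≤ |iteratedDeriv 3 Ψ t| :=
    hNdef ▸ csInf_le ⟨0, by rintro _ ⟨s, -, rfl⟩; exact abs_nonneg _⟩ (mem_image_of_mem _ ht)
  exact sq_add_le_mul_of_bounds hε hN (hconv t htI) hA₄ hB₂ hB₄ (hadm t htI) (hγ ▸ hB.le)
    hA₃ hB₃ hδ₂ hδ

theorem perturbed_admissibility
    (I : Set ℝ) (hIopen : IsOpen I) (hIconn : I.OrdConnected)
    (Φ : ℝ → ℝ) (hC4 : ContDiffOn ℝ 4 Φ I)
    (hconv : ∀ t ∈ I, 0 ≤ iteratedDeriv 2 Φ t)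
    (hadm : ∀ t ∈ I, 2 * (iteratedDeriv 3 Φ t) ^ 2 ≤
      iteratedDeriv 2 Φ t * iteratedDeriv 4 Φ t)
    (a b : ℝ) (hab : a < b) (hsub : Set.Icc a b ⊆ I)
    (p : ℝ) (hp1 : 1 < p) (hp2 : p < 2)
    (Ψ : ℝ → ℝ) (hΨ : Ψ = fun t => (t - a + 1) ^ p)
    (M N γ : ℝ)
    (hM : M = sSup ((fun t => |iteratedDeriv 3 Φ t|) '' Set.Ioo a b))
    (hNdef : N = sInf ((fun t => |iteratedDeriv 3 Ψ t|) '' Set.Ioo a b))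
    (hN : 0 < N) (hγ : γ = (3 - p) / (2 - p)) :
    ∀ ε > (0 : ℝ), ∀ δ : ℝ, 2 < δ →
      δ < min (Real.sqrt (2 * γ))
        ((2 * M ^ 2 + γ * ε ^ 2 * N ^ 2) / (M ^ 2 + ε ^ 2 * N ^ 2)) →
      ∀ t ∈ Set.Ioo a b,
        δ * (iteratedDeriv 3 (fun s => Φ s + ε * Ψ s) t) ^ 2 ≤
          iteratedDeriv 2 (fun s => Φ s + ε * Ψ s) t *
            iteratedDeriv 4 (fun s => Φ s + ε * Ψ s) t :=
  perturbed_admissibility_general I hIopen Φ hC4 hconv hadm a b hsub p hp1 hp2 Ψ hΨ M N γ hM hNdef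
    hN hγ
end
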